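/- arXiv:0808.1888 — 3 statements merged into one kernel-verified Lean document; each statement's English description precedes it below -/
import Mathlib

section
/- A graph G (loops allowed) satisfies ε(G) > 0 if and only if G has no nonempty simple (loopless) connected component, where ε(G) = q_N(G)(0) and q_N(G) = Σ_{S ⊆ V(G)} (y−1)^{n(G[S])} with n the GF(2) nullity of the adjacency matrix of G[S]. -/
open Finset

/-- GF(2) rank of the adjacency matrix of the induced subgraph on `S`. -/
noncomputable def mrank {V : Type} [Fintype V] [DecidableEq V]
    (M : Matrix V V (ZMod 2)) (S : Finset V) : ℕ :=
  (Matrix.of (fun i j : {v // v ∈ S} => M i.1 j.1)).rank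

/-- The unweighted vertex-nullity interlace polynomial
`q_N(G) = Σ_{S ⊆ V(G)} (y−1)^{n(G[S])}` as a polynomial in `y` over `ℤ`. -/
noncomputable def qN {V : Type} [Fintype V] [DecidableEq V]
    (M : Matrix V V (ZMod 2)) : Polynomial ℤ :=
  ∑ S ∈ (Finset.univ : Finset V).powerset,
    (Polynomial.X - 1) ^ (S.card - mrank M S)

/-- The simple graph underlying the (possibly looped) graph with adjacency matrix `M`. -/
def graphOf {V : Type} (M : Matrix V V (ZMod 2)) : SimpleGraph V where
  Adj v w := v ≠ w ∧ M v w = 1 ∧ M w v = 1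
  symm := ⟨fun _ _ h => ⟨h.1.symm, h.2.2, h.2.1⟩⟩
  loopless := ⟨fun _ h => h.1 rfl⟩

/-- Local complementation at `a`: toggle adjacencies (including loops) among
neighbors of `a` distinct from `a`. -/
def localComp {V : Type} [DecidableEq V] (M : Matrix V V (ZMod 2)) (a : V) :
    Matrix V V (ZMod 2) :=
  fun i j => if i = a ∨ j = a then M i j else M i j + M i a * M j a

set_option linter.unusedSectionVars false
set_option linter.unusedVariables false


variable {V : Type} [Fintype V] [DecidableEq V]

lemma zmod2_cases (x : ZMod 2) : x = 0 ∨ x = 1 := by revert x; decide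

lemma zmod2_add_self (x : ZMod 2) : x + x = 0 := by revert x; decide

/-- Kernel of the system `(Mx)|_S = 0`, `supp x ⊆ S`. -/
def kerS (M : Matrix V V (ZMod 2)) (S : Finset V) :
    Submodule (ZMod 2) (V → ZMod 2) where
  carrier := {x | (∀ v, v ∉ S → x v = 0) ∧ ∀ v ∈ S, ∑ j, M v j * x j = 0}
  zero_mem' := ⟨fun v _ => rfl, fun v _ => by simp⟩
  add_mem' := by
    rintro x y ⟨hx1, hx2⟩ ⟨hy1, hy2⟩
    refine ⟨fun v hv => by simp [hx1 v hv, hy1 v hv], fun v hv => ?_⟩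
    simp only [Pi.add_apply, mul_add, Finset.sum_add_distrib, hx2 v hv, hy2 v hv, add_zero]
  smul_mem' := by
    rintro c x ⟨hx1, hx2⟩
    refine ⟨fun v hv => by simp [hx1 v hv], fun v hv => ?_⟩
    simp only [Pi.smul_apply, smul_eq_mul]
    rw [show (∑ j, M v j * (c * x j)) = c * ∑ j, M v j * x j by
      rw [Finset.mul_sum]; exact Finset.sum_congr rfl fun j _ => by ring, hx2 v hv, mul_zero]

lemma mem_kerS {M : Matrix V V (ZMod 2)} {S : Finset V} {x : V → ZMod 2} :
    x ∈ kerS M S ↔ (∀ v, v ∉ S → x v = 0) ∧ ∀ v ∈ S, ∑ j, M v j * x j = 0 := Iff.rfl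

noncomputable def nulS (M : Matrix V V (ZMod 2)) (S : Finset V) : ℕ :=
  Module.finrank (ZMod 2) (kerS M S)

set_option linter.unusedSectionVars false

/-- Extension by zero as a linear map. -/
def extZero (S : Finset V) : ({v // v ∈ S} → ZMod 2) →ₗ[ZMod 2] (V → ZMod 2) where
  toFun y := fun v => if h : v ∈ S then y ⟨v, h⟩ else 0
  map_add' y z := by funext v; by_cases h : v ∈ S <;> simp [h]
  map_smul' c y := by funext v; by_cases h : v ∈ S <;> simp [h]

lemma sum_extZero (S : Finset V) (f : V → ZMod 2) (y : {v // v ∈ S} → ZMod 2) :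
    ∑ j, f j * extZero S y j = ∑ j : {v // v ∈ S}, f j.1 * y j := by
  rw [show (∑ j, f j * extZero S y j) = ∑ j ∈ S, f j * extZero S y j by
    refine (Finset.sum_subset (Finset.subset_univ S) fun x _ hx => ?_).symm
    simp [extZero, dif_neg hx]]
  rw [← Finset.sum_coe_sort S (fun j => f j * extZero S y j)]
  exact Finset.sum_congr rfl fun j _ => by simp [extZero, j.2]

lemma card_eq_mrank_add_nulS (M : Matrix V V (ZMod 2)) (S : Finset V) :
    S.card = mrank M S + nulS M S := by
  classical
  set B := (Matrix.of (fun i j : {v // v ∈ S} => M i.1 j.1)) with hB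
  have hrn := LinearMap.finrank_range_add_finrank_ker B.mulVecLin
  have hdom : Module.finrank (ZMod 2) ({v // v ∈ S} → ZMod 2) = S.card := by
    rw [Module.finrank_pi, Fintype.card_coe]
  have hker : Module.finrank (ZMod 2) (LinearMap.ker B.mulVecLin) = nulS M S := by
    have hmem : ∀ y ∈ LinearMap.ker B.mulVecLin, extZero S y ∈ kerS M S := by
      intro y hy
      rw [LinearMap.mem_ker] at hy
      refine ⟨fun v hv => by simp [extZero, dif_neg hv], fun v hv => ?_⟩
      rw [sum_extZero]
      have := congrFun hy ⟨v, hv⟩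
      simpa [Matrix.mulVecLin_apply, Matrix.mulVec, dotProduct, hB] using this
    have hbij : Function.Bijective ((extZero S).restrict hmem) := by
      constructor
      · intro y z hyz
        ext j
        have := congrFun (congrArg Subtype.val hyz) j.1
        simpa [LinearMap.restrict_apply, extZero, dif_pos j.2] using this
      · rintro ⟨x, hx1, hx2⟩
        refine ⟨⟨fun j => x j.1, ?_⟩, ?_⟩
        · rw [LinearMap.mem_ker]
          funext v
          have : ∑ j, M v.1 j * x j = 0 := hx2 v.1 v.2
          rw [show (∑ j, M v.1 j * x j) = ∑ j ∈ S, M v.1 j * x j by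
            refine (Finset.sum_subset (Finset.subset_univ S) fun u _ hu => ?_).symm
            simp [hx1 u hu]] at this
          rw [← Finset.sum_coe_sort S (fun j => M v.1 j * x j)] at this
          simpa [Matrix.mulVecLin_apply, Matrix.mulVec, dotProduct, hB] using this
        · ext v
          simp only [LinearMap.restrict_apply, extZero, LinearMap.coe_mk, AddHom.coe_mk]
          by_cases h : v ∈ S
          · simp [dif_pos h]
          · simp [dif_neg h, hx1 v h]
    exact (LinearEquiv.ofBijective _ hbij).finrank_eq
  rw [hdom] at hrn
  rw [← hrn, hker, mrank, ← hB]
  rfl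

lemma zmod2_eq_of_add_eq_zero {a b : ZMod 2} (h : a + b = 0) : a = b := by
  revert h; revert a b; decide

/-- zero out the coordinate at `a` -/
def zeroAt (a : V) : (V → ZMod 2) →ₗ[ZMod 2] (V → ZMod 2) where
  toFun x := fun v => if v = a then 0 else x v
  map_add' x y := by funext v; by_cases h : v = a <;> simp [h]
  map_smul' c x := by funext v; by_cases h : v = a <;> simp [h]

lemma sum_split (a : V) (f x : V → ZMod 2) :
    ∑ j, f j * x j = (∑ j ∈ Finset.univ.erase a, f j * x j) + f a * x a :=
  (Finset.sum_erase_add _ _ (Finset.mem_univ a)).symm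

lemma sum_zeroAt (a : V) (f x : V → ZMod 2) :
    ∑ j, f j * zeroAt a x j = ∑ j ∈ Finset.univ.erase a, f j * x j := by
  rw [sum_split a]
  have h1 : zeroAt a x a = 0 := by simp [zeroAt]
  rw [h1, mul_zero, add_zero]
  exact Finset.sum_congr rfl fun j hj => by
    simp [zeroAt, if_neg (Finset.ne_of_mem_erase hj)]

/-- key row computation for local complementation -/
lemma sum_localComp (M : Matrix V V (ZMod 2)) (a v : V) (hv : v ≠ a)
    (y : V → ZMod 2) (hy : y a = 0) :
    ∑ j, localComp M a v j * y j
      = (∑ j, M v j * y j) + M v a * ∑ j, M j a * y j := by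
  have : ∀ j, localComp M a v j * y j = M v j * y j + M v a * (M j a * y j) := by
    intro j
    by_cases hj : j = a
    · subst hj; rw [hy]; ring
    · simp only [localComp, if_neg (by tauto : ¬(v = a ∨ j = a))]; ring
  rw [Finset.sum_congr rfl fun j _ => this j, Finset.sum_add_distrib, Finset.mul_sum]

lemma pivot1 (M : Matrix V V (ZMod 2)) (hM : ∀ i j, M i j = M j i) (a : V) (S : Finset V)
    (haS : a ∈ S) (ha : M a a = 1) :
    nulS M S = nulS (localComp M a) (S.erase a) := by
  classical
  -- row identity for members of kerS M S
  have rowA : ∀ x ∈ kerS M S, ∀ v ∈ S,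
      ∑ j, M v j * zeroAt a x j = M v a * x a := by
    rintro x ⟨hx1, hx2⟩ v hv
    rw [sum_zeroAt]
    have := hx2 v hv
    rw [sum_split a] at this
    exact zmod2_eq_of_add_eq_zero this
  have hmem : ∀ x ∈ kerS M S, zeroAt a x ∈ kerS (localComp M a) (S.erase a) := by
    rintro x hx
    obtain ⟨hx1, hx2⟩ := hx
    have hya : zeroAt a x a = 0 := by simp [zeroAt]
    refine ⟨fun v hv => ?_, fun v hv => ?_⟩
    · by_cases h : v = a
      · simp [zeroAt, h]
      · simp only [zeroAt, LinearMap.coe_mk, AddHom.coe_mk, if_neg h]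
        exact hx1 v (fun hvS => hv (Finset.mem_erase.2 ⟨h, hvS⟩))
    · have hvne : v ≠ a := (Finset.mem_erase.1 hv).1
      have hvS : v ∈ S := (Finset.mem_erase.1 hv).2
      rw [sum_localComp M a v hvne _ hya]
      have h1 : ∑ j, M v j * zeroAt a x j = M v a * x a := rowA x ⟨hx1, hx2⟩ v hvS
      have h2 : ∑ j, M j a * zeroAt a x j = x a := by
        have : ∑ j, M j a * zeroAt a x j = ∑ j, M a j * zeroAt a x j :=
          Finset.sum_congr rfl fun j _ => by rw [hM j a]
        rw [this, rowA x ⟨hx1, hx2⟩ a haS, ha, one_mul]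
      rw [h1, h2]
      exact zmod2_add_self _
  have hbij : Function.Bijective ((zeroAt a).restrict hmem) := by
    constructor
    · rintro ⟨x, hx⟩ ⟨x', hx'⟩ hxx
      have heq : ∀ v, v ≠ a → x v = x' v := by
        intro v hv
        have := congrFun (congrArg Subtype.val hxx) v
        simpa [LinearMap.restrict_apply, zeroAt, if_neg hv] using this
      have hxa : ∀ (z : V → ZMod 2), z ∈ kerS M S →
          z a = ∑ j ∈ Finset.univ.erase a, M a j * z j := by
        rintro z ⟨hz1, hz2⟩
        have := hz2 a haS
        rw [sum_split a, ha, one_mul, add_comm] at this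
        exact zmod2_eq_of_add_eq_zero this
      refine Subtype.ext (funext fun v => ?_)
      show x v = x' v
      by_cases hv : v = a
      · subst hv
        rw [hxa x hx, hxa x' hx']
        exact Finset.sum_congr rfl fun j hj => by
          rw [heq j (Finset.ne_of_mem_erase hj)]
      · exact heq v hv
    · rintro ⟨y, hy1, hy2⟩
      set c := ∑ j, M a j * y j with hc
      set x : V → ZMod 2 := fun v => if v = a then c else y v with hxdef
      have hya : y a = 0 := hy1 a (by simp)
      have hzx : zeroAt a x = y := by
        funext v
        by_cases hv : v = a
        · simp [zeroAt, hv, hya]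
        · simp [zeroAt, hxdef, if_neg hv]
      have hrow : ∀ v, ∑ j, M v j * x j = (∑ j, M v j * y j) + M v a * c := by
        intro v
        rw [sum_split a (fun j => M v j) x]
        have h1 : x a = c := by simp [hxdef]
        have e1 : ∑ j ∈ Finset.univ.erase a, M v j * x j
            = ∑ j ∈ Finset.univ.erase a, M v j * y j :=
          Finset.sum_congr rfl fun j hj => by
            rw [hxdef]; simp [if_neg (Finset.ne_of_mem_erase hj)]
        rw [h1, e1, Finset.sum_erase _ (by rw [hya, mul_zero])]
      have hxmem : x ∈ kerS M S := by
        refine ⟨fun v hv => ?_, fun v hv => ?_⟩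
        · have hva : v ≠ a := fun h => hv (h ▸ haS)
          rw [hxdef]; simp only [if_neg hva]
          exact hy1 v (fun hve => hv (Finset.mem_of_mem_erase hve))
        · rw [hrow v]
          by_cases hva : v = a
          · subst hva; rw [ha, one_mul, ← hc]; exact zmod2_add_self c
          · have hvS : v ∈ S.erase a := Finset.mem_erase.2 ⟨hva, hv⟩
            have := hy2 v hvS
            have hstep : ∑ j, localComp M a v j * y j
                = (∑ j, M v j * y j) + M v a * c := by
              rw [sum_localComp M a v hva y hya]
              congr 1
              rw [hc]
              congr 1
              exact Finset.sum_congr rfl fun j _ => by rw [hM j a]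
            rw [hstep] at this
            have : (∑ j, M v j * y j) = M v a * c := zmod2_eq_of_add_eq_zero this
            rw [this]
            exact zmod2_add_self _
      exact ⟨⟨x, hxmem⟩, Subtype.ext hzx⟩
  exact (LinearEquiv.ofBijective _ hbij).finrank_eq

lemma nulS_zero (M : Matrix V V (ZMod 2)) (S : Finset V)
    (h : ∀ i ∈ S, ∀ j ∈ S, M i j = 0) : nulS M S = S.card := by
  classical
  let L : kerS M S →ₗ[ZMod 2] ({v // v ∈ S} → ZMod 2) :=
    { toFun := fun x => fun v => x.1 v.1
      map_add' := fun x y => rfl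
      map_smul' := fun c x => rfl }
  have hbij : Function.Bijective L := by
    constructor
    · rintro ⟨x, hx1, hx2⟩ ⟨y, hy1, hy2⟩ hxy
      refine Subtype.ext (funext fun v => ?_)
      show x v = y v
      by_cases hv : v ∈ S
      · exact congrFun hxy ⟨v, hv⟩
      · rw [hx1 v hv, hy1 v hv]
    · intro y
      refine ⟨⟨extZero S y, fun v hv => by simp [extZero, dif_neg hv], fun v hv => ?_⟩, ?_⟩
      · rw [sum_extZero]
        exact Finset.sum_eq_zero fun j _ => by rw [h v hv j.1 j.2, zero_mul]
      · funext v
        show extZero S y v.1 = y v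
        simp [extZero, dif_pos v.2]
  have := (LinearEquiv.ofBijective L hbij).finrank_eq
  rw [nulS, this, Module.finrank_pi, Fintype.card_coe]

def pivot2 (M : Matrix V V (ZMod 2)) (a b : V) : Matrix V V (ZMod 2) :=
  fun i j => M i j + M i a * M b j + M i b * M a j

lemma z_aab {A B C : ZMod 2} (h : A + B + C = 0) : A = B + C := by
  revert h; revert A B C; decide

lemma z_l1 (p q : ZMod 2) : q + p + p + q = 0 := by revert p q; decide

lemma z_l2 (p q : ZMod 2) : p + q + q + p = 0 := by revert p q; decide

lemma sum_pivot2 (M : Matrix V V (ZMod 2)) (a b v : V) (y : V → ZMod 2) :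
    ∑ j, pivot2 M a b v j * y j
      = (∑ j, M v j * y j) + M v a * (∑ j, M b j * y j)
          + M v b * (∑ j, M a j * y j) := by
  have hterm : ∀ j, pivot2 M a b v j * y j
      = M v j * y j + M v a * (M b j * y j) + M v b * (M a j * y j) := by
    intro j; simp only [pivot2]; ring
  rw [Finset.sum_congr rfl fun j _ => hterm j, Finset.sum_add_distrib,
    Finset.sum_add_distrib, Finset.mul_sum, Finset.mul_sum]

def zero2 (a b : V) : (V → ZMod 2) →ₗ[ZMod 2] (V → ZMod 2) where
  toFun x := fun v => if v = a ∨ v = b then 0 else x v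
  map_add' x y := by funext v; by_cases h : v = a ∨ v = b <;> simp [h]
  map_smul' c x := by funext v; by_cases h : v = a ∨ v = b <;> simp [h]

lemma sum_zero2 (a b : V) (f x : V → ZMod 2) :
    ∑ j, f j * zero2 a b x j = ∑ j ∈ (Finset.univ.erase a).erase b, f j * x j := by
  have e1 : ∑ j ∈ (Finset.univ.erase a).erase b, f j * zero2 a b x j
      = ∑ j ∈ (Finset.univ.erase a).erase b, f j * x j :=
    Finset.sum_congr rfl fun j hj => by
      have hja : j ≠ a := Finset.ne_of_mem_erase (Finset.mem_of_mem_erase hj)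
      have hjb : j ≠ b := Finset.ne_of_mem_erase hj
      simp [zero2, hja, hjb]
  have e2 : ∑ j ∈ (Finset.univ.erase a).erase b, f j * zero2 a b x j
      = ∑ j ∈ Finset.univ.erase a, f j * zero2 a b x j :=
    Finset.sum_erase _ (by simp [zero2])
  have e3 : ∑ j ∈ Finset.univ.erase a, f j * zero2 a b x j
      = ∑ j, f j * zero2 a b x j :=
    Finset.sum_erase _ (by simp [zero2])
  rw [← e3, ← e2, e1]

lemma sum_split2 (a b : V) (hab : a ≠ b) (f x : V → ZMod 2) :
    ∑ j, f j * x j = ((∑ j ∈ (Finset.univ.erase a).erase b, f j * x j)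
      + f b * x b) + f a * x a := by
  rw [sum_split a f x]
  congr 1
  exact (Finset.sum_erase_add _ _ (Finset.mem_erase.2 ⟨(Ne.symm hab), Finset.mem_univ b⟩)).symm

lemma pivot2_nul (M : Matrix V V (ZMod 2)) (hM : ∀ i j, M i j = M j i) {S : Finset V} (a b : V)
    (hab : a ≠ b) (haS : a ∈ S) (hbS : b ∈ S) (hMab : M a b = 1)
    (haa : M a a = 0) (hbb : M b b = 0) :
    nulS M S = nulS (pivot2 M a b) ((S.erase a).erase b) := by
  classical
  have hMba : M b a = 1 := by rw [← hM a b]; exact hMab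
  have rowX : ∀ x ∈ kerS M S, ∀ v ∈ S,
      ∑ j, M v j * zero2 a b x j = M v b * x b + M v a * x a := by
    rintro x ⟨hx1, hx2⟩ v hv
    rw [sum_zero2]
    have := hx2 v hv
    rw [sum_split2 a b hab] at this
    exact z_aab this
  have hxa : ∀ x ∈ kerS M S, x a = ∑ j, M b j * zero2 a b x j := by
    intro x hx
    rw [rowX x hx b hbS, hbb, hMba, zero_mul, one_mul, zero_add]
  have hxb : ∀ x ∈ kerS M S, x b = ∑ j, M a j * zero2 a b x j := by
    intro x hx
    rw [rowX x hx a haS, haa, hMab, zero_mul, one_mul, add_zero]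
  have hmem : ∀ x ∈ kerS M S, zero2 a b x ∈ kerS (pivot2 M a b) ((S.erase a).erase b) := by
    rintro x hx
    obtain ⟨hx1, hx2⟩ := hx
    refine ⟨fun v hv => ?_, fun v hv => ?_⟩
    · by_cases h : v = a ∨ v = b
      · simp [zero2, h]
      · push_neg at h
        simp only [zero2, LinearMap.coe_mk, AddHom.coe_mk, if_neg (by tauto : ¬(v = a ∨ v = b))]
        refine hx1 v fun hvS => hv ?_
        exact Finset.mem_erase.2 ⟨h.2, Finset.mem_erase.2 ⟨h.1, hvS⟩⟩
    · have hvb : v ≠ b := (Finset.mem_erase.1 hv).1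
      have hva : v ≠ a := (Finset.mem_erase.1 (Finset.mem_of_mem_erase hv)).1
      have hvS : v ∈ S := Finset.mem_of_mem_erase (Finset.mem_of_mem_erase hv)
      rw [sum_pivot2, rowX x ⟨hx1, hx2⟩ v hvS, ← hxa x ⟨hx1, hx2⟩, ← hxb x ⟨hx1, hx2⟩]
      exact z_l1 _ _
  have hbij : Function.Bijective ((zero2 a b).restrict hmem) := by
    constructor
    · rintro ⟨x, hx⟩ ⟨x', hx'⟩ hxx
      have hzz : zero2 a b x = zero2 a b x' := congrArg Subtype.val hxx
      refine Subtype.ext (funext fun v => ?_)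
      show x v = x' v
      by_cases hv : v = a
      · subst hv; rw [hxa x hx, hxa x' hx', hzz]
      · by_cases hv' : v = b
        · subst hv'; rw [hxb x hx, hxb x' hx', hzz]
        · have := congrFun hzz v
          simpa [zero2, if_neg (by tauto : ¬(v = a ∨ v = b))] using this
    · rintro ⟨y, hy1, hy2⟩
      set c := ∑ j, M b j * y j with hc
      set d := ∑ j, M a j * y j with hd
      set x : V → ZMod 2 := fun v => if v = a then c else if v = b then d else y v with hxdef
      have hya : y a = 0 := hy1 a (by simp [hab])
      have hyb : y b = 0 := hy1 b (by simp)
      have hzx : zero2 a b x = y := by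
        funext v
        by_cases hv : v = a ∨ v = b
        · rcases hv with hv | hv <;> subst hv <;> simp [zero2, hya, hyb]
        · push_neg at hv
          simp [zero2, hxdef, if_neg (by tauto : ¬(v = a ∨ v = b)), hv.1, hv.2]
      have hrow : ∀ v, ∑ j, M v j * x j = ((∑ j, M v j * y j) + M v b * d) + M v a * c := by
        intro v
        rw [sum_split2 a b hab (fun j => M v j) x]
        have h1 : x a = c := by simp [hxdef]
        have h2 : x b = d := by simp [hxdef, Ne.symm hab]
        have e1 : ∑ j ∈ (Finset.univ.erase a).erase b, M v j * x j
            = ∑ j ∈ (Finset.univ.erase a).erase b, M v j * y j :=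
          Finset.sum_congr rfl fun j hj => by
            have hja : j ≠ a := Finset.ne_of_mem_erase (Finset.mem_of_mem_erase hj)
            have hjb : j ≠ b := Finset.ne_of_mem_erase hj
            rw [hxdef]; simp [hja, hjb]
        rw [h1, h2, e1, Finset.sum_erase _ (by rw [hyb, mul_zero]),
          Finset.sum_erase _ (by rw [hya, mul_zero])]
      have hxmem : x ∈ kerS M S := by
        refine ⟨fun v hv => ?_, fun v hv => ?_⟩
        · have hva : v ≠ a := fun h => hv (h ▸ haS)
          have hvb : v ≠ b := fun h => hv (h ▸ hbS)
          rw [hxdef]; simp only [if_neg hva, if_neg hvb]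
          exact hy1 v fun hve => hv
            (Finset.mem_of_mem_erase (Finset.mem_of_mem_erase hve))
        · rw [hrow v]
          by_cases hva : v = a
          · subst hva
            rw [hMab, haa, one_mul, zero_mul, add_zero, ← hd]
            exact zmod2_add_self d
          · by_cases hvb : v = b
            · subst hvb
              rw [hbb, hMba, zero_mul, add_zero, one_mul, ← hc]
              exact zmod2_add_self c
            · have hv2 := hy2 v (Finset.mem_erase.2 ⟨hvb, Finset.mem_erase.2 ⟨hva, hv⟩⟩)
              rw [sum_pivot2, ← hc, ← hd] at hv2
              rw [z_aab hv2]
              exact z_l2 _ _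
      exact ⟨⟨x, hxmem⟩, Subtype.ext hzx⟩
  exact (LinearEquiv.ofBijective _ hbij).finrank_eq

lemma lc_diag (M : Matrix V V (ZMod 2)) {a x : V} (hxa : x ≠ a) :
    localComp M a x x = M x x + M x a * M x a := by simp [localComp, hxa]

lemma lc_off (M : Matrix V V (ZMod 2)) {a x y : V} (hxa : x ≠ a) (hya : y ≠ a) :
    localComp M a x y = M x y + M x a * M y a := by simp [localComp, hxa, hya]

lemma lc_symm (M : Matrix V V (ZMod 2)) (hM : ∀ i j, M i j = M j i) (a : V) :
    ∀ i j, localComp M a i j = localComp M a j i := by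
  intro i j
  simp only [localComp]
  by_cases h : i = a ∨ j = a
  · rw [if_pos h, if_pos (Or.symm h), hM i j]
  · rw [if_neg h, if_neg (fun hh => h (Or.symm hh)), hM i j, hM i a, hM j a]
    ring

lemma pivot2_symm (M : Matrix V V (ZMod 2)) (hM : ∀ i j, M i j = M j i) (a b : V) :
    ∀ i j, pivot2 M a b i j = pivot2 M a b j i := by
  intro i j
  simp only [pivot2]
  rw [hM i j, hM i a, hM b j, hM i b, hM a j]
  ring

lemma pivot2_diag (M : Matrix V V (ZMod 2)) (hM : ∀ i j, M i j = M j i) (a b i : V)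
    (hii : M i i = 0) : pivot2 M a b i i = 0 := by
  simp only [pivot2]
  rw [hii, zero_add, hM b i, hM a i, mul_comm (M i b) (M i a)]
  exact zmod2_add_self _

lemma parity_nulS : ∀ (n : ℕ) (S : Finset V) (M : Matrix V V (ZMod 2)), S.card ≤ n →
    (∀ i j, M i j = M j i) → (∀ i ∈ S, M i i = 0) → nulS M S % 2 = S.card % 2 := by
  intro n
  induction n with
  | zero =>
    intro S M hc hM hd
    rw [nulS_zero M S fun i hi j hj => by
      have : S = ∅ := Finset.card_eq_zero.1 (Nat.le_zero.1 hc)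
      exact absurd hi (by simp [this])]
  | succ n ih =>
    intro S M hc hM hd
    by_cases h0 : ∀ i ∈ S, ∀ j ∈ S, M i j = 0
    · rw [nulS_zero M S h0]
    · push_neg at h0
      obtain ⟨a, haS, b, hbS, hab0⟩ := h0
      have hMab : M a b = 1 := (zmod2_cases _).resolve_left hab0
      have hab : a ≠ b := fun h => by
        subst h; rw [hd a haS] at hMab; exact one_ne_zero hMab.symm
      rw [pivot2_nul M hM a b hab haS hbS hMab (hd a haS) (hd b hbS)]
      have hbS' : b ∈ S.erase a := Finset.mem_erase.2 ⟨Ne.symm hab, hbS⟩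
      have hcard2 : ((S.erase a).erase b).card = S.card - 2 := by
        rw [Finset.card_erase_of_mem hbS', Finset.card_erase_of_mem haS]
        omega
      have h2 : 1 < S.card := Finset.one_lt_card.2 ⟨a, haS, b, hbS, hab⟩
      have hrec := ih ((S.erase a).erase b) (pivot2 M a b) (by omega)
        (pivot2_symm M hM a b)
        (fun i hi => pivot2_diag M hM a b i
          (hd i (Finset.mem_of_mem_erase (Finset.mem_of_mem_erase hi))))
      rw [hrec, hcard2]
      omega

lemma negpow_congr {m k : ℕ} (h : m % 2 = k % 2) : ((-1 : ℤ))^m = (-1)^k := by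
  rcases Nat.even_or_odd m with he | ho
  · have hm := Nat.even_iff.1 he
    have hk : Even k := Nat.even_iff.2 (by omega)
    rw [he.neg_one_pow, hk.neg_one_pow]
  · have hm := Nat.odd_iff.1 ho
    have hk : Odd k := Nat.odd_iff.2 (by omega)
    rw [ho.neg_one_pow, hk.neg_one_pow]

def rel (M : Matrix V V (ZMod 2)) (W : Finset V) (x y : V) : Prop :=
  x ∈ W ∧ y ∈ W ∧ x ≠ y ∧ M x y = 1

def reach (M : Matrix V V (ZMod 2)) (W : Finset V) : V → V → Prop :=
  Relation.ReflTransGen (rel M W)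

def PP (M : Matrix V V (ZMod 2)) (W : Finset V) : Prop :=
  ∀ v ∈ W, ∃ w, reach M W v w ∧ M w w = 1

lemma reach_mem {M : Matrix V V (ZMod 2)} {W : Finset V} {v w : V}
    (hv : v ∈ W) (h : reach M W v w) : w ∈ W := by
  induction h with
  | refl => exact hv
  | tail _ h ih => exact h.2.1

lemma reach_mono {M : Matrix V V (ZMod 2)} {W' W : Finset V} {v w : V}
    (h : W' ⊆ W) (hr : reach M W' v w) : reach M W v w :=
  Relation.ReflTransGen.mono (fun x y hxy => ⟨h hxy.1, h hxy.2.1, hxy.2.2⟩) _ _ hr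

lemma shrink1 {M : Matrix V V (ZMod 2)} (hM : ∀ i j, M i j = M j i) {W : Finset V} {a : V}
    (haW : a ∈ W) (ha : M a a = 1) (hnp : ¬ PP M W) :
    ¬ PP M (W.erase a) ∧ ¬ PP (localComp M a) (W.erase a) := by
  rw [PP] at hnp
  push_neg at hnp
  obtain ⟨v, hv, hv2⟩ := hnp
  have hva : v ≠ a := by
    intro h
    subst h
    exact hv2 v Relation.ReflTransGen.refl ha
  have hvW' : v ∈ W.erase a := Finset.mem_erase.2 ⟨hva, hv⟩
  constructor
  · intro hp
    obtain ⟨w, hw1, hw2⟩ := hp v hvW'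
    exact hv2 w (reach_mono (Finset.erase_subset a W) hw1) hw2
  · intro hp
    obtain ⟨w, hw1, hw2⟩ := hp v hvW'
    have claim : ∀ w, reach (localComp M a) (W.erase a) v w →
        reach M W v w ∧ M w a = 0 := by
      intro w hw
      induction hw with
      | refl =>
        refine ⟨Relation.ReflTransGen.refl, ?_⟩
        by_contra h
        have h1 : M v a = 1 := (zmod2_cases _).resolve_left h
        exact hv2 a (Relation.ReflTransGen.single ⟨hv, haW, hva, h1⟩) ha
      | tail hb hstep ih =>
        obtain ⟨hr, hba⟩ := ih
        obtain ⟨hbW', huW', hbu, hN⟩ := hstep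
        have hbne : _ ≠ a := (Finset.mem_erase.1 hbW').1
        have hune : _ ≠ a := (Finset.mem_erase.1 huW').1
        rw [lc_off M hbne hune, hba, zero_mul, add_zero] at hN
        have hr2 : reach M W v _ := hr.tail
          ⟨Finset.mem_of_mem_erase hbW', Finset.mem_of_mem_erase huW', hbu, hN⟩
        refine ⟨hr2, ?_⟩
        by_contra h
        have h1 : M _ a = 1 := (zmod2_cases _).resolve_left h
        exact hv2 a (hr2.tail ⟨Finset.mem_of_mem_erase huW', haW, hune, h1⟩) ha
    obtain ⟨hr, hwa⟩ := claim w hw1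
    have hwne : w ≠ a := (Finset.mem_erase.1 (reach_mem hvW' hw1)).1
    rw [lc_diag M hwne, hwa, mul_zero, add_zero] at hw2
    exact hv2 w hr hw2

lemma grow1 {M : Matrix V V (ZMod 2)} (hM : ∀ i j, M i j = M j i) {W : Finset V} {a : V}
    (haW : a ∈ W) (ha : M a a = 1) (hP : PP M W) (hnp : ¬ PP M (W.erase a)) :
    PP (localComp M a) (W.erase a) := by
  set W' := W.erase a with hW'
  set N := localComp M a with hN
  rw [PP] at hnp
  push_neg at hnp
  obtain ⟨v₀, hv₀, h₀⟩ := hnp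
  -- find a vertex c in the simple component of v₀ adjacent to a
  obtain ⟨w₁, hw₁r, hw₁l⟩ := hP v₀ (Finset.mem_of_mem_erase hv₀)
  have claim1 : ∀ u, reach M W v₀ u →
      (∃ c, reach M W' v₀ c ∧ M c a = 1) ∨ reach M W' v₀ u := by
    intro u hu
    induction hu with
    | refl => exact Or.inr Relation.ReflTransGen.refl
    | @tail b u' hb hstep ih =>
      rcases ih with h | h
      · exact Or.inl h
      · obtain ⟨hbW, huW, hbu, hMbu⟩ := hstep
        by_cases hua : u' = a
        · subst hua
          exact Or.inl ⟨b, h, hMbu⟩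
        · exact Or.inr (h.tail ⟨reach_mem hv₀ h, Finset.mem_erase.2 ⟨hua, huW⟩, hbu, hMbu⟩)
  have hc : ∃ c, reach M W' v₀ c ∧ M c a = 1 := by
    rcases claim1 w₁ hw₁r with h | h
    · exact h
    · exact absurd hw₁l (h₀ w₁ h)
  obtain ⟨c, hcr, hca⟩ := hc
  have hcc : M c c = 0 := (zmod2_cases _).resolve_right (h₀ c hcr)
  have hcW' : c ∈ W' := reach_mem hv₀ hcr
  have hcne : c ≠ a := (Finset.mem_erase.1 hcW').1
  have hNcc : N c c = 1 := by
    rw [hN, lc_diag M hcne, hcc, hca, zero_add, one_mul]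
  -- now prove PP
  intro v hvW'
  have good : ∀ x, x ∈ W' → reach N W' v x → M x a = 1 →
      ∃ u, reach N W' v u ∧ N u u = 1 := by
    intro x hxW' hrx hxa
    by_cases hxc : x = c
    · subst hxc
      exact ⟨x, hrx, hNcc⟩
    · have hxne : x ≠ a := (Finset.mem_erase.1 hxW').1
      by_cases hMxc : M x c = 1
      · have hxr : reach M W' v₀ x := hcr.tail
          ⟨hcW', hxW', fun h => hxc h.symm, by rw [hM c x]; exact hMxc⟩
        have hxx : M x x = 0 := (zmod2_cases _).resolve_right (h₀ x hxr)
        refine ⟨x, hrx, ?_⟩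
        rw [hN, lc_diag M hxne, hxx, hxa, zero_add, one_mul]
      · have hMxc0 : M x c = 0 := (zmod2_cases _).resolve_right hMxc
        have hNxc : N x c = 1 := by
          rw [hN, lc_off M hxne hcne, hMxc0, hxa, hca, zero_add, one_mul]
        exact ⟨c, hrx.tail ⟨hxW', hcW', hxc, hNxc⟩, hNcc⟩
  have main : ∀ u, reach M W v u →
      (∃ u', reach N W' v u' ∧ N u' u' = 1) ∨ (u ∈ W' ∧ reach N W' v u ∧ M u a = 0) := by
    intro u hu
    induction hu with
    | refl =>
      by_cases hva : M v a = 1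
      · exact Or.inl (good v hvW' Relation.ReflTransGen.refl hva)
      · exact Or.inr ⟨hvW', Relation.ReflTransGen.refl, (zmod2_cases _).resolve_right hva⟩
    | @tail b u' hb hstep ih =>
      rcases ih with h | ⟨hbW', hbr, hba⟩
      · exact Or.inl h
      · obtain ⟨hbW, huW, hbu, hMbu⟩ := hstep
        have hbne : b ≠ a := (Finset.mem_erase.1 hbW').1
        have hua : u' ≠ a := by
          intro h
          rw [h] at hMbu
          rw [hba] at hMbu
          exact one_ne_zero hMbu.symm
        have huW' : u' ∈ W' := Finset.mem_erase.2 ⟨hua, huW⟩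
        have hNbu : N b u' = 1 := by
          rw [hN, lc_off M hbne hua, hMbu, hba, zero_mul, add_zero]
        have hru : reach N W' v u' := hbr.tail ⟨hbW', huW', hbu, hNbu⟩
        by_cases hMua : M u' a = 1
        · exact Or.inl (good u' huW' hru hMua)
        · exact Or.inr ⟨huW', hru, (zmod2_cases _).resolve_right hMua⟩
  obtain ⟨w, hwr, hwl⟩ := hP v (Finset.mem_of_mem_erase hvW')
  rcases main w hwr with ⟨u, h1, h2⟩ | ⟨hwW', hwr', hwa⟩
  · exact ⟨u, h1, h2⟩
  · refine ⟨w, hwr', ?_⟩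
    rw [hN, lc_diag M (Finset.mem_erase.1 hwW').1, hwl, hwa, mul_zero, add_zero]

noncomputable def epsF (M : Matrix V V (ZMod 2)) (W : Finset V) : ℤ :=
  ∑ S ∈ W.powerset, (-1 : ℤ)^(nulS M S)

lemma epsF_split (M : Matrix V V (ZMod 2)) (hM : ∀ i j, M i j = M j i) {W : Finset V}
    {a : V} (haW : a ∈ W) (ha : M a a = 1) :
    epsF M W = epsF M (W.erase a) + epsF (localComp M a) (W.erase a) := by
  have key : ∀ (W' : Finset V), a ∉ W' →
      epsF M (insert a W') = epsF M W' + epsF (localComp M a) W' := by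
    intro W' haW'
    rw [epsF, Finset.sum_powerset_insert haW']
    congr 1
    refine Finset.sum_congr rfl fun t ht => ?_
    have hat : a ∉ t := fun h => haW' (Finset.mem_powerset.1 ht h)
    have hpiv := pivot1 M hM a (insert a t) (Finset.mem_insert_self a t) ha
    rw [Finset.erase_insert hat] at hpiv
    rw [hpiv]
  calc epsF M W = epsF M (insert a (W.erase a)) := by rw [Finset.insert_erase haW]
    _ = _ := key _ (Finset.notMem_erase a W)

theorem mainthm : ∀ (n : ℕ) (W : Finset V) (M : Matrix V V (ZMod 2)), W.card ≤ n →
    (∀ i j, M i j = M j i) → 0 ≤ epsF M W ∧ (0 < epsF M W ↔ PP M W) := by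
  intro n
  induction n with
  | zero =>
    intro W M hc hM
    have hW : W = ∅ := Finset.card_eq_zero.1 (Nat.le_zero.1 hc)
    subst hW
    have h1 : epsF M ∅ = 1 := by
      rw [epsF, Finset.powerset_empty, Finset.sum_singleton,
        nulS_zero M ∅ (fun i hi => absurd hi (Finset.notMem_empty i)), Finset.card_empty,
        pow_zero]
    rw [h1]
    exact ⟨by norm_num, by
      constructor
      · intro _ v hv
        exact absurd hv (Finset.notMem_empty v)
      · intro _
        norm_num⟩
  | succ n ih =>
    intro W M hc hM
    by_cases hloop : ∃ a ∈ W, M a a = 1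
    · obtain ⟨a, haW, ha⟩ := hloop
      have hsplit := epsF_split M hM haW ha
      have hM' := lc_symm M hM a
      have hcard : (W.erase a).card ≤ n := by
        rw [Finset.card_erase_of_mem haW]
        have : 1 ≤ W.card := Finset.card_pos.2 ⟨a, haW⟩
        omega
      obtain ⟨IH1a, IH1b⟩ := ih (W.erase a) M hcard hM
      obtain ⟨IH2a, IH2b⟩ := ih (W.erase a) (localComp M a) hcard hM'
      constructor
      · rw [hsplit]; linarith
      · constructor
        · intro hpos
          by_contra hnp
          obtain ⟨h1, h2⟩ := shrink1 hM haW ha hnp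
          have e1 : epsF M (W.erase a) = 0 := by
            rcases lt_or_eq_of_le IH1a with h | h
            · exact absurd (IH1b.1 h) h1
            · exact h.symm
          have e2 : epsF (localComp M a) (W.erase a) = 0 := by
            rcases lt_or_eq_of_le IH2a with h | h
            · exact absurd (IH2b.1 h) h2
            · exact h.symm
          rw [hsplit, e1, e2] at hpos
          exact lt_irrefl 0 hpos
        · intro hp
          rw [hsplit]
          by_cases hp' : PP M (W.erase a)
          · have := IH1b.2 hp'
            linarith
          · have := IH2b.2 (grow1 hM haW ha hp hp')
            linarith
    · push_neg at hloop
      have hdiag : ∀ i ∈ W, M i i = 0 := fun i hi =>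
        (zmod2_cases _).resolve_right (hloop i hi)
      have heps : epsF M W = if W = ∅ then 1 else 0 := by
        rw [epsF, Finset.sum_congr rfl (fun S hS => negpow_congr
          (parity_nulS S.card S M le_rfl hM
            (fun i hi => hdiag i (Finset.mem_powerset.1 hS hi))))]
        exact Finset.sum_powerset_neg_one_pow_card
      by_cases hW : W = ∅
      · subst hW
        rw [heps, if_pos rfl]
        exact ⟨by norm_num, by
          constructor
          · intro _ v hv
            exact absurd hv (Finset.notMem_empty v)
          · intro _; norm_num⟩
      · rw [heps, if_neg hW]
        refine ⟨le_rfl, ?_⟩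
        constructor
        · intro h
          exact absurd h (lt_irrefl 0)
        · intro hp
          obtain ⟨v, hv⟩ := Finset.nonempty_iff_ne_empty.2 hW
          obtain ⟨w, hwr, hwl⟩ := hp v hv
          rw [hdiag w (reach_mem hv hwr)] at hwl
          exact absurd hwl.symm one_ne_zero


lemma qN_eval_eq_epsF (M : Matrix V V (ZMod 2)) :
    (qN M).eval 0 = epsF M Finset.univ := by
  rw [qN, epsF, Polynomial.eval_finset_sum]
  refine Finset.sum_congr rfl fun S hS => ?_
  rw [Polynomial.eval_pow, Polynomial.eval_sub, Polynomial.eval_X, Polynomial.eval_one,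
    zero_sub]
  congr 1
  have h := card_eq_mrank_add_nulS M S
  omega

theorem eps_pos_iff_no_simple_component {V : Type} [Fintype V] [DecidableEq V]
    (M : Matrix V V (ZMod 2)) (hM : M.IsSymm) :
    0 < (qN M).eval 0 ↔
      ∀ v : V, ∃ w : V, (graphOf M).Reachable v w ∧ M w w = 1 := by
  have hMs : ∀ i j, M i j = M j i := fun i j => hM.apply j i
  have hPP : PP M Finset.univ ↔
      ∀ v : V, ∃ w : V, (graphOf M).Reachable v w ∧ M w w = 1 := by
    constructor
    · intro h v
      obtain ⟨w, hr, hl⟩ := h v (Finset.mem_univ v)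
      refine ⟨w, ?_, hl⟩
      rw [SimpleGraph.reachable_iff_reflTransGen]
      exact Relation.ReflTransGen.mono
        (fun x y hxy => ⟨hxy.2.2.1, hxy.2.2.2, by rw [hMs y x]; exact hxy.2.2.2⟩) _ _ hr
    · intro h v _
      obtain ⟨w, hr, hl⟩ := h v
      refine ⟨w, ?_, hl⟩
      rw [SimpleGraph.reachable_iff_reflTransGen] at hr
      exact Relation.ReflTransGen.mono
        (fun x y hxy => ⟨Finset.mem_univ x, Finset.mem_univ y, hxy.1, hxy.2.1⟩) _ _ hr
  rw [qN_eval_eq_epsF]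
  exact ((mainthm (Finset.univ : Finset V).card Finset.univ M le_rfl hMs).2).trans hPP
end

section
/- Let H be a graph with unlooped vertex a and let M^a be obtained from the adjacency matrix M of H[S] (S ⊆ V(H−a)) by toggling every entry m_{ij} with v_i, v_j ∈ N(a). Then r([[M,κ],[ρ,1]]) = 1 + r(M^a), where κ is the indicator column of S ∩ N(a), ρ = κᵀ, and all ranks are over GF(2). Consequently: S is of type 1 iff r(M) = r(M^a); of type 2 iff r(M) = r(M^a) − 1; of type 3 iff r(M) = r(M^a) + 1. -/
/-- The symmetric matrix obtained by bordering `M` with the column `κ`, the row `κ`,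
and corner entry `ε`. -/
def border {n : Type} (M : Matrix n n (ZMod 2)) (κ : n → ZMod 2) (ε : ZMod 2) :
    Matrix (Option n) (Option n) (ZMod 2) :=
  fun i j =>
    match i, j with
    | some i, some j => M i j
    | some i, none => κ i
    | none, some j => κ j
    | none, none => ε

/-- `S` is of type 1: `r(M) = r([[M,κ],[ρ,0]]) = r([[M,κ],[ρ,1]]) − 1`. -/
noncomputable def IsType1 {n : Type} [Fintype n] [DecidableEq n]
    (M : Matrix n n (ZMod 2)) (κ : n → ZMod 2) : Prop :=
  M.rank = (border M κ 0).rank ∧ (border M κ 0).rank + 1 = (border M κ 1).rank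

/-- `S` is of type 2: `r(M) + 2 = r([[M,κ],[ρ,0]]) = r([[M,κ],[ρ,1]])`. -/
noncomputable def IsType2 {n : Type} [Fintype n] [DecidableEq n]
    (M : Matrix n n (ZMod 2)) (κ : n → ZMod 2) : Prop :=
  M.rank + 2 = (border M κ 0).rank ∧ (border M κ 0).rank = (border M κ 1).rank

/-- `S` is of type 3: `r(M) = r([[M,κ],[ρ,1]]) = r([[M,κ],[ρ,0]]) − 1`. -/
noncomputable def IsType3 {n : Type} [Fintype n] [DecidableEq n]
    (M : Matrix n n (ZMod 2)) (κ : n → ZMod 2) : Prop :=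
  M.rank = (border M κ 1).rank ∧ (border M κ 1).rank + 1 = (border M κ 0).rank

namespace BorderRankAux

open Matrix Module Submodule

variable {n : Type} [Fintype n] [DecidableEq n]

/-- The congruence matrix adding the last row/column, scaled by `κ`, to the others. -/
def Pm (κ : n → ZMod 2) : Matrix (Option n) (Option n) (ZMod 2) :=
  fun i j =>
    match i, j with
    | some i, some j => if i = j then 1 else 0
    | none, some j => κ j
    | some _, none => 0
    | none, none => 1

lemma Pm_mul_Pm (κ : n → ZMod 2) : Pm κ * Pm κ = 1 := by
  ext x y
  cases x <;> cases y <;>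
    simp [Matrix.mul_apply, Fintype.sum_option, Pm, Matrix.one_apply, mul_ite, ite_mul,
      Finset.sum_ite_eq, Finset.sum_ite_eq', CharTwo.add_self_eq_zero]

lemma conj_one (M : Matrix n n (ZMod 2)) (κ : n → ZMod 2) :
    (Pm κ)ᵀ * border M κ 1 * Pm κ =
      border (Matrix.of fun i j => M i j + κ i * κ j) 0 1 := by
  ext x y
  cases x <;> cases y <;>
    simp [Matrix.mul_apply, Fintype.sum_option, Pm, border, Matrix.transpose_apply, mul_ite,
      ite_mul, Finset.sum_ite_eq, Finset.sum_ite_eq', Finset.mul_sum, Finset.sum_mul,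
      Finset.sum_add_distrib, mul_comm, mul_assoc, mul_left_comm, add_comm,
      CharTwo.add_self_eq_zero]

/-- The congruence matrix adding `x`-combinations of the first rows/columns to the last one. -/
def Rm (x : n → ZMod 2) : Matrix (Option n) (Option n) (ZMod 2) :=
  fun i j =>
    match i, j with
    | some i, some j => if i = j then 1 else 0
    | none, some _ => 0
    | some i, none => x i
    | none, none => 1

lemma Rm_mul_Rm (x : n → ZMod 2) : Rm x * Rm x = 1 := by
  ext a b
  cases a <;> cases b <;>
    simp [Matrix.mul_apply, Fintype.sum_option, Rm, Matrix.one_apply, mul_ite, ite_mul,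
      Finset.sum_ite_eq, Finset.sum_ite_eq', CharTwo.add_self_eq_zero]

lemma conj_R (M : Matrix n n (ZMod 2)) (hM : M.IsSymm) (κ x : n → ZMod 2)
    (hx : M.mulVec x = κ) (ε : ZMod 2) :
    (Rm x)ᵀ * border M κ ε * Rm x = border M 0 (κ ⬝ᵥ x + ε) := by
  have hs : ∀ i j, M j i = M i j := fun i j => congrFun (congrFun hM i) j
  have hxi : ∀ i, ∑ j, M i j * x j = κ i := fun i => by
    rw [← hx]; simp [Matrix.mulVec, dotProduct]
  have hxi' : ∀ i, ∑ j, x j * M j i = κ i := fun i => by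
    rw [← hxi i]; exact Finset.sum_congr rfl fun j _ => by rw [hs j i, mul_comm]
  have hxi'' : ∀ i, ∑ j, M j i * x j = κ i := fun i => by
    rw [← hxi' i]; exact Finset.sum_congr rfl fun j _ => mul_comm _ _
  have hcomm : ∑ i, x i * κ i = ∑ i, κ i * x i :=
    Finset.sum_congr rfl fun j _ => mul_comm _ _
  ext a b
  cases a <;> cases b <;>
    simp [Matrix.mul_apply, Fintype.sum_option, Rm, border, Matrix.transpose_apply, mul_ite,
      ite_mul, Finset.sum_ite_eq, Finset.sum_ite_eq', Finset.mul_sum, Finset.sum_mul,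
      dotProduct, Finset.sum_add_distrib, hxi, hxi', hxi'', hcomm,
      CharTwo.add_self_eq_zero, add_comm]

lemma rank_conj {B P : Matrix (Option n) (Option n) (ZMod 2)} (hP : P * P = 1) :
    (Pᵀ * B * P).rank = B.rank := by
  have hdet : P.det * P.det = 1 := by rw [← Matrix.det_mul, hP, Matrix.det_one]
  have hu : IsUnit P.det := ⟨⟨P.det, P.det, hdet, hdet⟩, rfl⟩
  have hu' : IsUnit Pᵀ.det := by rwa [Matrix.det_transpose]
  rw [Matrix.rank_mul_eq_left_of_isUnit_det _ _ hu, Matrix.rank_mul_eq_right_of_isUnit_det _ _ hu']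

lemma finrank_sup_span_singleton' {K V : Type*} [Field K] [AddCommGroup V] [Module K V]
    [FiniteDimensional K V] (p : Submodule K V) {v : V} (hv : v ∉ p) :
    finrank K ↥(p ⊔ span K {v}) = finrank K ↥p + 1 := by
  have hv0 : v ≠ 0 := fun h => hv (h ▸ p.zero_mem)
  have hd : Disjoint p (span K {v}) := (Submodule.disjoint_span_singleton' hv0).mpr hv
  have h := Submodule.finrank_sup_add_finrank_inf_eq p (span K {v})
  rw [hd.eq_bot, finrank_bot, finrank_span_singleton hv0] at h
  omega

def ext0 : (n → ZMod 2) →ₗ[ZMod 2] (Option n → ZMod 2) where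
  toFun v o := o.elim 0 v
  map_add' u v := by ext o; cases o <;> simp
  map_smul' c v := by ext o; cases o <;> simp

omit [Fintype n] [DecidableEq n] in
lemma ext0_inj : Function.Injective (ext0 (n := n)) := fun u v h =>
  funext fun i => congrFun h (some i)

lemma range_option {α β : Type*} (f : Option α → β) :
    Set.range f = insert (f none) (Set.range (f ∘ some)) := by
  ext b
  constructor
  · rintro ⟨o, rfl⟩
    cases o with
    | none => exact Or.inl rfl
    | some a => exact Or.inr ⟨a, rfl⟩
  · rintro (rfl | ⟨a, rfl⟩)
    exacts [⟨none, rfl⟩, ⟨some a, rfl⟩]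

lemma rank_border_zero (X : Matrix n n (ZMod 2)) (c : ZMod 2) :
    (border X 0 c).rank = X.rank + if c = 0 then 0 else 1 := by
  rw [Matrix.rank_eq_finrank_span_row]
  have h1 : (border X 0 c).row ∘ some = ⇑(ext0 (n := n)) ∘ X.row := by
    funext i; funext y; cases y <;> rfl
  have h2 : (border X 0 c).row none = fun o => o.elim c 0 := by
    funext y; cases y <;> rfl
  rw [range_option, h1, h2, Set.range_comp, Submodule.span_insert, Submodule.span_image]
  have hm : finrank (ZMod 2) ↥(Submodule.map ext0 (span (ZMod 2) (Set.range X.row))) = X.rank := by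
    rw [← LinearEquiv.finrank_eq (Submodule.equivMapOfInjective _ ext0_inj _),
      Matrix.rank_eq_finrank_span_row]
  by_cases hc : c = 0
  · subst hc
    have : (fun o : Option n => o.elim (0 : ZMod 2) 0) = 0 := by
      funext o; cases o <;> rfl
    rw [this, Submodule.span_zero_singleton, bot_sup_eq, hm]
    simp
  · have hd : (fun o : Option n => o.elim c 0) ∉
        Submodule.map ext0 (span (ZMod 2) (Set.range X.row)) := by
      rintro ⟨v, -, hv⟩
      exact hc (congrFun hv none).symm
    rw [sup_comm, finrank_sup_span_singleton' _ hd, hm]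
    simp [hc]

lemma rank_border_notmem (M : Matrix n n (ZMod 2)) (hM : M.IsSymm) (κ : n → ZMod 2)
    (h : κ ∉ LinearMap.range M.mulVecLin) (ε : ZMod 2) :
    (border M κ ε).rank = M.rank + 2 := by
  have hs : ∀ i j, M j i = M i j := fun i j => congrFun (congrFun hM i) j
  set A' : Matrix n (Option n) (ZMod 2) := fun i o => o.elim (κ i) (M i) with hA'
  rw [Matrix.rank_eq_finrank_span_row]
  have h1 : (border M κ ε).row ∘ some = A' := by
    funext i; funext y; cases y <;> rfl
  have h2 : (border M κ ε).row none = fun o => o.elim ε κ := by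
    funext y; cases y <;> rfl
  rw [range_option, h1, h2, Submodule.span_insert]
  have hAT : Set.range A'.col = insert κ (Set.range M.col) := by
    rw [range_option A'.col]
    rfl
  have hr1 : finrank (ZMod 2) ↥(span (ZMod 2) (Set.range A')) = M.rank + 1 := by
    rw [show Set.range A' = Set.range A'.row from rfl, ← Matrix.rank_eq_finrank_span_row,
      Matrix.rank_eq_finrank_span_cols, hAT,
      Submodule.span_insert, sup_comm, ← Matrix.range_mulVecLin]
    rw [finrank_sup_span_singleton' _ h, Matrix.rank]
  have hd : (fun o => o.elim ε κ) ∉ span (ZMod 2) (Set.range A') := by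
    rw [show Set.range A' = Set.range A'.row from rfl, ← range_vecMulLinear]
    rintro ⟨y, hy⟩
    apply h
    refine ⟨y, ?_⟩
    funext j
    have hj := congrFun hy (some j)
    rw [Matrix.vecMulLinear_apply] at hj
    simp only [Matrix.vecMulLinear_apply, Matrix.vecMul, dotProduct, hA',
      Option.elim_some, Option.elim] at hj
    simp only [Matrix.mulVecLin_apply, Matrix.mulVec, dotProduct]
    rw [← hj]
    exact Finset.sum_congr rfl fun i _ => by rw [hs j i, mul_comm]
  rw [sup_comm, finrank_sup_span_singleton' _ hd, hr1]

end BorderRankAux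

open Matrix BorderRankAux in
theorem border_rank_localComp {n : Type} [Fintype n] [DecidableEq n]
    (M : Matrix n n (ZMod 2)) (hM : M.IsSymm) (κ : n → ZMod 2) :
    (border M κ 1).rank = 1 + (Matrix.of fun i j => M i j + κ i * κ j).rank ∧
      (IsType1 M κ ↔ M.rank = (Matrix.of fun i j => M i j + κ i * κ j).rank) ∧
      (IsType2 M κ ↔ M.rank + 1 = (Matrix.of fun i j => M i j + κ i * κ j).rank) ∧
      (IsType3 M κ ↔ M.rank = (Matrix.of fun i j => M i j + κ i * κ j).rank + 1) := by
  -- the main rank formula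
  have hb1 : (border M κ 1).rank = 1 + (Matrix.of fun i j => M i j + κ i * κ j).rank := by
    rw [← rank_conj (Pm_mul_Pm κ), conj_one, rank_border_zero]
    simp [Nat.add_comm]
  -- the trichotomy for the ranks of the two borderings
  have hcase : ((border M κ 0).rank = M.rank ∧ (border M κ 1).rank = M.rank + 1) ∨
      ((border M κ 0).rank = M.rank + 1 ∧ (border M κ 1).rank = M.rank) ∨
      ((border M κ 0).rank = M.rank + 2 ∧ (border M κ 1).rank = M.rank + 2) := by
    by_cases h : κ ∈ LinearMap.range M.mulVecLin
    · obtain ⟨x, hx⟩ := h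
      have hx' : M.mulVec x = κ := hx
      have h0 : (border M κ 0).rank = (border M 0 (κ ⬝ᵥ x + 0)).rank := by
        rw [← rank_conj (Rm_mul_Rm x), conj_R M hM κ x hx']
      have h1 : (border M κ 1).rank = (border M 0 (κ ⬝ᵥ x + 1)).rank := by
        rw [← rank_conj (Rm_mul_Rm x), conj_R M hM κ x hx']
      have hδ : κ ⬝ᵥ x = 0 ∨ κ ⬝ᵥ x = 1 := by
        have : ∀ a : ZMod 2, a = 0 ∨ a = 1 := by decide
        exact this _
      rcases hδ with hδ | hδ
      · left
        rw [h0, h1, hδ]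
        norm_num [rank_border_zero]
      · right; left
        have e0 : (1 : ZMod 2) + 0 = 1 := by decide
        have e1 : (1 : ZMod 2) + 1 = 0 := by decide
        rw [h0, h1, hδ, e0, e1, rank_border_zero, rank_border_zero]
        refine ⟨?_, ?_⟩ <;> norm_num
    · right; right
      exact ⟨rank_border_notmem M hM κ h 0, rank_border_notmem M hM κ h 1⟩
  refine ⟨hb1, ?_, ?_, ?_⟩ <;>
    simp only [IsType1, IsType2, IsType3] <;>
    rcases hcase with ⟨hA, hB⟩ | ⟨hA, hB⟩ | ⟨hA, hB⟩ <;>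
    omega
end

section
/- Let T be an ordered rooted tree with root r and let ℓ be a leaf with p(ℓ) ≠ r, ℓ ≠ r, such that all siblings of ℓ are leaves and ℓ has no later siblings. Then (i) the es-covers I of T with ℓ ∉ I are exactly the es-covers of T − ℓ, and (ii) the es-covers I of T with ℓ ∈ I are exactly the sets of the form p⁻¹({p(ℓ)}) ∪ J where J is an es-cover of T − p(ℓ) − p⁻¹({p(ℓ)}). -/
open Finset

/-- The weighted interlace polynomial of the graph with adjacency matrix `M`
restricted to the vertex set `U`, with vertex weights `α`, `β`, evaluated at `x`, `y`. -/
noncomputable def interlaceQ {V : Type} [Fintype V] [DecidableEq V]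
    {R : Type} [CommRing R] (M : Matrix V V (ZMod 2)) (U : Finset V)
    (α β : V → R) (x y : R) : R :=
  ∑ S ∈ U.powerset, (∏ s ∈ S, α s) * (∏ v ∈ U \ S, β v) *
    (x - 1) ^ mrank M S * (y - 1) ^ (S.card - mrank M S)

/-- The adjacency matrix of the (loopless) tree determined by the parent function `p`:
`v` and `w` are adjacent iff they are distinct and one is the parent of the other. -/
def treeAdj {V : Type} [DecidableEq V] (p : V → V) : Matrix V V (ZMod 2) :=
  fun i j => if i ≠ j ∧ (p i = j ∨ p j = i) then 1 else 0

/-- A vertex `w` is dominated by `I` in the rooted tree with root `r` and parent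
function `p`: it belongs to `I`, or its parent does, or one of its children does. -/
def Dominated {V : Type} (p : V → V) (r : V) (I : Finset V) (w : V) : Prop :=
  w ∈ I ∨ (w ≠ r ∧ p w ∈ I) ∨ ∃ u ∈ I, u ≠ r ∧ p u = w

/-- `I` is an earlier-sibling cover of the portion `U` of the ordered rooted tree
with root `r` and parent function `p` (children of a common parent ordered by `<`):
`I ⊆ U` is independent, dominates the root, and every earlier sibling (in `U`) of
every non-root element of `I` is dominated by `I`. -/
def IsEsCover {V : Type} [LinearOrder V] (p : V → V) (r : V) (U I : Finset V) : Prop :=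
  I ⊆ U ∧
    (∀ v ∈ I, ∀ w ∈ I, v ≠ w → ¬(p v = w ∨ p w = v)) ∧
    Dominated p r I r ∧
    ∀ v ∈ I, v ≠ r → ∀ w ∈ U, w ≠ r → w ≠ v → p w = p v → w < v → Dominated p r I w

/-- Recursion for earlier-sibling covers at a last-sibling leaf `ℓ`. -/
theorem escover_leaf_recursion {V : Type} [Fintype V] [LinearOrder V]
    (p : V → V) (r : V) (hroot : p r = r)
    (hwf : ∀ v : V, ∃ k : ℕ, p^[k] v = r)
    (ℓ : V) (hlr : ℓ ≠ r) (hplr : p ℓ ≠ r)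
    (hleaf : ∀ v : V, v ≠ r → p v ≠ ℓ)
    (hsibleaf : ∀ w : V, w ≠ r → p w = p ℓ → ∀ v : V, v ≠ r → p v ≠ w)
    (hlast : ∀ w : V, w ≠ r → w ≠ ℓ → p w = p ℓ → w < ℓ) :
    (∀ I : Finset V,
        (IsEsCover p r Finset.univ I ∧ ℓ ∉ I) ↔
          IsEsCover p r (Finset.univ.erase ℓ) I) ∧
      ∀ I : Finset V,
        (IsEsCover p r Finset.univ I ∧ ℓ ∈ I) ↔
          ∃ J : Finset V,
            IsEsCover p r
              ((Finset.univ \ insert (p ℓ) (Finset.univ.filter fun w => w ≠ r ∧ p w = p ℓ))) J ∧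
            I = (Finset.univ.filter fun w => w ≠ r ∧ p w = p ℓ) ∪ J := by
  classical
  -- the only fixed point of p is r
  have hfix : ∀ v : V, p v = v → v = r := by
    intro v hv
    obtain ⟨k, hk⟩ := hwf v
    have hiter : ∀ n : ℕ, p^[n] v = v := by
      intro n
      induction n with
      | zero => simp
      | succ m ih => rw [Function.iterate_succ_apply, hv, ih]
    rw [hiter k] at hk; exact hk
  have hlpl : ℓ ≠ p ℓ := fun h => hlr (hfix ℓ h.symm)
  set S : Finset V := Finset.univ.filter fun w => w ≠ r ∧ p w = p ℓ with hS
  have hmemS : ∀ w : V, w ∈ S ↔ (w ≠ r ∧ p w = p ℓ) := by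
    intro w; simp [hS]
  have hlS : ℓ ∈ S := (hmemS ℓ).2 ⟨hlr, rfl⟩
  have hrS : r ∉ S := fun h => ((hmemS r).1 h).1 rfl
  have hplS : p ℓ ∉ S := by
    intro h
    exact hplr (hfix (p ℓ) ((hmemS (p ℓ)).1 h).2)
  have hmono : ∀ I I' : Finset V, I ⊆ I' → ∀ w, Dominated p r I w → Dominated p r I' w := by
    intro I I' hII w h
    rcases h with h | ⟨h1, h2⟩ | ⟨u, hu, h1, h2⟩
    · exact Or.inl (hII h)
    · exact Or.inr (Or.inl ⟨h1, hII h2⟩)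
    · exact Or.inr (Or.inr ⟨u, hII hu, h1, h2⟩)
  constructor
  · -- Part (i)
    intro I
    constructor
    · rintro ⟨⟨hsub, hind, hdom, hes⟩, hlI⟩
      refine ⟨?_, hind, hdom, ?_⟩
      · intro x hx
        exact Finset.mem_erase.2 ⟨fun he => hlI (he ▸ hx), Finset.mem_univ x⟩
      · intro v hv hvr w hw hwr hwv hpw hlt
        exact hes v hv hvr w (Finset.mem_univ w) hwr hwv hpw hlt
    · rintro ⟨hsub, hind, hdom, hes⟩
      have hlI : ℓ ∉ I := fun h => (Finset.mem_erase.1 (hsub h)).1 rfl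
      refine ⟨⟨fun x _ => Finset.mem_univ x, hind, hdom, ?_⟩, hlI⟩
      intro v hv hvr w _ hwr hwv hpw hlt
      by_cases hwl : w = ℓ
      · -- then v is an earlier sibling of ℓ, contradicting w < v
        exfalso
        have hvl : v ≠ ℓ := fun h => hlI (h ▸ hv)
        have hpv : p v = p ℓ := by rw [← hpw, hwl]
        have := hlast v hvr hvl hpv
        rw [hwl] at hlt
        exact absurd (hlt.trans this) (lt_irrefl ℓ)
      · exact hes v hv hvr w (Finset.mem_erase.2 ⟨hwl, Finset.mem_univ w⟩) hwr hwv hpw hlt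
  · -- Part (ii)
    intro I
    constructor
    · rintro ⟨⟨hsub, hind, hdom, hes⟩, hlI⟩
      have hplI : p ℓ ∉ I := fun h => hind ℓ hlI (p ℓ) h hlpl (Or.inl rfl)
      -- all siblings of ℓ (the set S) are in I
      have hSI : S ⊆ I := by
        intro w hw
        obtain ⟨hwr, hpw⟩ := (hmemS w).1 hw
        by_cases hwl : w = ℓ
        · exact hwl ▸ hlI
        · have hlt : w < ℓ := hlast w hwr hwl hpw
          rcases hes ℓ hlI hlr w (Finset.mem_univ w) hwr hwl hpw hlt with
            h | ⟨h1, h2⟩ | ⟨u, hu, h1, h2⟩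
          · exact h
          · rw [hpw] at h2; exact absurd h2 hplI
          · exact absurd h2 (hsibleaf w hwr hpw u h1)
      refine ⟨I \ S, ⟨?_, ?_, ?_, ?_⟩, ?_⟩
      · -- subset
        intro j hj
        obtain ⟨hjI, hjS⟩ := Finset.mem_sdiff.1 hj
        refine Finset.mem_sdiff.2 ⟨Finset.mem_univ j, ?_⟩
        intro hmem
        rcases Finset.mem_insert.1 hmem with h | h
        · exact hplI (h ▸ hjI)
        · exact hjS h
      · -- independence
        intro v hv w hw hvw
        exact hind v (Finset.mem_sdiff.1 hv).1 w (Finset.mem_sdiff.1 hw).1 hvw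
      · -- root domination
        rcases hdom with h | ⟨h1, _⟩ | ⟨u, hu, h1, h2⟩
        · exact Or.inl (Finset.mem_sdiff.2 ⟨h, hrS⟩)
        · exact absurd rfl h1
        · refine Or.inr (Or.inr ⟨u, Finset.mem_sdiff.2 ⟨hu, ?_⟩, h1, h2⟩)
          intro huS
          exact hplr (((hmemS u).1 huS).2 ▸ h2)
      · -- earlier siblings
        intro v hv hvr w hw hwr hwv hpw hlt
        obtain ⟨hvI, _⟩ := Finset.mem_sdiff.1 hv
        have hwU := Finset.mem_sdiff.1 hw
        have hwpl : w ≠ p ℓ := fun h => hwU.2 (Finset.mem_insert.2 (Or.inl h))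
        have hwS : w ∉ S := fun h => hwU.2 (Finset.mem_insert.2 (Or.inr h))
        rcases hes v hvI hvr w (Finset.mem_univ w) hwr hwv hpw hlt with
          h | ⟨h1, h2⟩ | ⟨u, hu, h1, h2⟩
        · exact Or.inl (Finset.mem_sdiff.2 ⟨h, hwS⟩)
        · refine Or.inr (Or.inl ⟨h1, Finset.mem_sdiff.2 ⟨h2, ?_⟩⟩)
          intro hpwS
          obtain ⟨hpwr, hppw⟩ := (hmemS (p w)).1 hpwS
          exact hsibleaf (p w) hpwr hppw w hwr rfl
        · refine Or.inr (Or.inr ⟨u, Finset.mem_sdiff.2 ⟨hu, ?_⟩, h1, h2⟩)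
          intro huS
          exact hwpl (h2.symm.trans ((hmemS u).1 huS).2)
      · -- I = S ∪ (I \ S)
        rw [Finset.union_sdiff_of_subset hSI]
    · rintro ⟨J, ⟨hJsub, hJind, hJdom, hJes⟩, hI⟩
      have hJI : J ⊆ I := hI ▸ Finset.subset_union_right
      have hJfacts : ∀ j ∈ J, j ≠ p ℓ ∧ j ∉ S := by
        intro j hj
        have := (Finset.mem_sdiff.1 (hJsub hj)).2
        constructor
        · intro h; exact this (Finset.mem_insert.2 (Or.inl h))
        · intro h; exact this (Finset.mem_insert.2 (Or.inr h))
      have hlI : ℓ ∈ I := hI ▸ Finset.mem_union_left J hlS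
      refine ⟨⟨fun x _ => Finset.mem_univ x, ?_, hmono J I hJI r hJdom, ?_⟩, hlI⟩
      · -- independence
        intro v hv w hw hvw
        rw [hI] at hv hw
        -- helper: no vertex w ≠ r has parent in S
        have hnp : ∀ a : V, a ∈ S → ∀ b : V, p b ≠ a := by
          intro a haS b hb
          obtain ⟨har, hpa⟩ := (hmemS a).1 haS
          by_cases hbr : b = r
          · rw [hbr, hroot] at hb; exact har hb.symm
          · exact hsibleaf a har hpa b hbr hb
        rcases Finset.mem_union.1 hv with hvS | hvJ <;>
          rcases Finset.mem_union.1 hw with hwS | hwJ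
        · rintro (h | h)
          · exact hnp w hwS v h
          · exact hnp v hvS w h
        · rintro (h | h)
          · exact (hJfacts w hwJ).1 (by rw [← h, ((hmemS v).1 hvS).2])
          · exact hnp v hvS w h
        · rintro (h | h)
          · exact hnp w hwS v h
          · exact (hJfacts v hvJ).1 (by rw [← h, ((hmemS w).1 hwS).2])
        · exact hJind v hvJ w hwJ hvw
      · -- earlier siblings
        intro v hv hvr w _ hwr hwv hpw hlt
        rw [hI] at hv
        rcases Finset.mem_union.1 hv with hvS | hvJ
        · -- v ∈ S: then w is also a sibling of ℓ, so w ∈ S ⊆ I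
          have hwS : w ∈ S := (hmemS w).2 ⟨hwr, by rw [hpw, ((hmemS v).1 hvS).2]⟩
          exact Or.inl (hI ▸ Finset.mem_union_left J hwS)
        · by_cases hwpl : w = p ℓ
          · exact Or.inr (Or.inr ⟨ℓ, hlI, hlr, hwpl.symm⟩)
          · by_cases hwS : w ∈ S
            · exact Or.inl (hI ▸ Finset.mem_union_left J hwS)
            · have hwU : w ∈ Finset.univ \ insert (p ℓ) S := by
                refine Finset.mem_sdiff.2 ⟨Finset.mem_univ w, ?_⟩
                intro hmem
                rcases Finset.mem_insert.1 hmem with h | h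
                · exact hwpl h
                · exact hwS h
              exact hmono J I hJI w (hJes v hvJ hvr w hwU hwr hwv hpw hlt)
end
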